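/- arXiv:1601.05547 — 2 statements merged into one kernel-verified Lean document; each statement's English description precedes it below -/
import Mathlib

section
/- Let Λ < 0 and k, k' ∈ ℝ, with M_k(ξ) = ∫_0^∞ 1_{k>ξ-Λu} e^{-u} du. Then ∫_ℝ |M_k(ξ) - M_{k'}(ξ)| dξ = |k - k'|. -/
open MeasureTheory Real Set

lemma expmul_cont (b : ℝ) : Continuous (fun x : ℝ => Real.exp (b * x)) :=
  Real.continuous_exp.comp (continuous_const.mul continuous_id)

lemma intervalIntegral_expmul {b : ℝ} (hb : b ≠ 0) (x y : ℝ) :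
    ∫ t in x..y, Real.exp (b * t) = b⁻¹ * (Real.exp (b * y) - Real.exp (b * x)) := by
  rw [intervalIntegral.integral_comp_mul_left Real.exp hb, integral_exp]
  simp [smul_eq_mul]

lemma intOn_Iic_expmul {b : ℝ} (hb : 0 < b) (c : ℝ) :
    IntegrableOn (fun x : ℝ => Real.exp (b * x)) (Iic c) := by
  refine integrableOn_Iic_of_intervalIntegral_norm_bounded
    (b⁻¹ * Real.exp (b * c)) c
    (fun i : ℝ => ((expmul_cont b).integrableOn_Ioc)) Filter.tendsto_id ?_
  filter_upwards with y
  have h1 : ∀ x : ℝ, ‖Real.exp (b * x)‖ = Real.exp (b * x) := fun x =>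
    Real.norm_of_nonneg (Real.exp_pos _).le
  simp_rw [h1, intervalIntegral_expmul hb.ne']
  have h2 := Real.exp_pos (b * (id y : ℝ))
  have h3 : (0:ℝ) < b⁻¹ := inv_pos.2 hb
  nlinarith

lemma integral_Iic_expmul {b : ℝ} (hb : 0 < b) (c : ℝ) :
    ∫ x in Iic c, Real.exp (b * x) = b⁻¹ * Real.exp (b * c) := by
  have h := integral_comp_neg_Iic c (fun x => Real.exp (-(b * x)))
  simp only [mul_neg, neg_neg] at h
  rw [h, integral_comp_mul_left_Ioi (fun y => Real.exp (-y)) (-c) hb,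
    integral_exp_neg_Ioi, smul_eq_mul]
  ring_nf

lemma intOn_Iio_aux {Λ : ℝ} (hΛ : Λ < 0) (c a : ℝ) :
    IntegrableOn (fun ξ : ℝ => Real.exp ((c - ξ) / Λ)) (Iio a) ∧
    ∫ ξ in Iio a, Real.exp ((c - ξ) / Λ) = -Λ * Real.exp ((c - a) / Λ) := by
  have hb : (0:ℝ) < -Λ⁻¹ := by
    have : Λ⁻¹ < 0 := inv_neg''.mpr hΛ
    linarith
  have hfun : ∀ ξ : ℝ, Real.exp ((c - ξ) / Λ) = Real.exp (c / Λ) * Real.exp (-Λ⁻¹ * ξ) := by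
    intro ξ
    rw [← Real.exp_add]
    congr 1
    field_simp
    ring
  have hIic : IntegrableOn (fun ξ : ℝ => Real.exp ((c - ξ) / Λ)) (Iic a) := by
    exact IntegrableOn.congr_fun ((intOn_Iic_expmul hb a).const_mul (Real.exp (c / Λ)))
      (fun ξ _ => (hfun ξ).symm) measurableSet_Iic
  constructor
  · exact hIic.mono_set Iio_subset_Iic_self
  · rw [setIntegral_congr_set Iio_ae_eq_Iic]
    calc ∫ ξ in Iic a, Real.exp ((c - ξ) / Λ)
        = ∫ ξ in Iic a, Real.exp (c / Λ) * Real.exp (-Λ⁻¹ * ξ) := by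
          exact setIntegral_congr_fun measurableSet_Iic (fun ξ _ => hfun ξ)
      _ = Real.exp (c / Λ) * ((-Λ⁻¹)⁻¹ * Real.exp (-Λ⁻¹ * a)) := by
          rw [integral_const_mul, integral_Iic_expmul hb]
      _ = -Λ * Real.exp ((c - a) / Λ) := by
          have h4 : (-Λ⁻¹)⁻¹ = -Λ := by field_simp
          rw [h4, hfun a]
          ring

lemma Mval {Λ : ℝ} (hΛ : Λ < 0) (c ξ : ℝ) :
    (∫ u in Ioi (0:ℝ), (if ξ - Λ * u < c then (1:ℝ) else 0) * Real.exp (-u))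
      = if ξ < c then 1 - Real.exp ((c - ξ) / Λ) else 0 := by
  have hΛ' : (0:ℝ) < -Λ := by linarith
  by_cases hξ : ξ < c
  · set T := (c - ξ) / (-Λ) with hT
    have hT0 : 0 < T := div_pos (by linarith) hΛ'
    have key : ∀ u : ℝ, (ξ - Λ * u < c) ↔ u < T := by
      intro u
      rw [hT, lt_div_iff₀ hΛ']
      constructor <;> intro h <;> nlinarith
    have h1 : ∀ u : ℝ, (if ξ - Λ * u < c then (1:ℝ) else 0) * Real.exp (-u)
        = (Iio T).indicator (fun u => Real.exp (-u)) u := by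
      intro u
      by_cases h : u < T
      · rw [if_pos ((key u).2 h), indicator_of_mem (mem_Iio.2 h) _, one_mul]
      · rw [if_neg (fun hh => h ((key u).1 hh)), indicator_of_notMem (fun hh => h (mem_Iio.1 hh)) _, zero_mul]
    simp_rw [h1]
    rw [setIntegral_indicator measurableSet_Iio, Ioi_inter_Iio,
      ← integral_Ioc_eq_integral_Ioo, ← intervalIntegral.integral_of_le hT0.le,
      intervalIntegral.integral_comp_neg (fun x => Real.exp x)]
    simp only [neg_zero]
    rw [integral_exp, if_pos hξ, Real.exp_zero]
    have : -T = (c - ξ) / Λ := by rw [hT, div_neg, neg_neg]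
    rw [this]
  · rw [if_neg hξ]
    rw [setIntegral_congr_fun measurableSet_Ioi (g := fun _ => (0:ℝ))]
    · exact integral_zero _ _
    · intro u hu
      have hnc : ¬(ξ - Λ * u < c) := by
        push_neg at hξ ⊢
        nlinarith [mem_Ioi.1 hu]
      simp [hnc]

lemma intervalIntegral_expdiv {Λ : ℝ} (hΛ : Λ < 0) (c x y : ℝ) :
    ∫ t in x..y, Real.exp ((c - t) / Λ) =
      -Λ * (Real.exp ((c - y) / Λ) - Real.exp ((c - x) / Λ)) := by
  have hb : (0:ℝ) < -Λ⁻¹ := by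
    have : Λ⁻¹ < 0 := inv_neg''.mpr hΛ
    linarith
  have hfun : ∀ t : ℝ, Real.exp ((c - t) / Λ) = Real.exp (c / Λ) * Real.exp (-Λ⁻¹ * t) := by
    intro t
    rw [← Real.exp_add]
    congr 1
    field_simp
    ring
  rw [intervalIntegral.integral_congr (g := fun t => Real.exp (c / Λ) * Real.exp (-Λ⁻¹ * t))
    (fun t _ => hfun t), intervalIntegral.integral_const_mul, intervalIntegral_expmul hb.ne']
  have h4 : (-Λ⁻¹)⁻¹ = -Λ := by field_simp
  rw [h4, hfun x, hfun y]
  ring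

lemma core (Λ k k' : ℝ) (hΛ : Λ < 0) (hkk : k' ≤ k)
    (M : ℝ → ℝ → ℝ)
    (hM : ∀ c ξ : ℝ, M c ξ =
      ∫ u in Ioi (0:ℝ), (if ξ - Λ * u < c then (1:ℝ) else 0) * Real.exp (-u)) :
    Integrable (fun ξ : ℝ => M k ξ - M k' ξ) ∧ (∀ ξ, 0 ≤ M k ξ - M k' ξ) ∧
    (∫ ξ : ℝ, (M k ξ - M k' ξ)) = k - k' := by
  have hMv : ∀ c ξ, M c ξ = if ξ < c then 1 - Real.exp ((c - ξ) / Λ) else 0 :=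
    fun c ξ => (hM c ξ).trans (Mval hΛ c ξ)
  set A : ℝ → ℝ := (Ico k' k).indicator (fun ξ => 1 - Real.exp ((k - ξ) / Λ)) with hA
  set B : ℝ → ℝ :=
    (Iio k').indicator (fun ξ => Real.exp ((k' - ξ) / Λ) - Real.exp ((k - ξ) / Λ)) with hB
  have hFAB : ∀ ξ, M k ξ - M k' ξ = A ξ + B ξ := by
    intro ξ
    rw [hMv, hMv, hA, hB]
    rcases lt_or_ge ξ k' with h1 | h1
    · have h2 : ξ < k := lt_of_lt_of_le h1 hkk
      rw [if_pos h2, if_pos h1,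
        indicator_of_notMem (by simp only [mem_Ico, not_and, not_lt]; intro h; linarith) _,
        indicator_of_mem (mem_Iio.2 h1) _]
      ring
    · rcases lt_or_ge ξ k with h2 | h2
      · rw [if_pos h2, if_neg (not_lt.2 h1), indicator_of_mem (mem_Ico.2 ⟨h1, h2⟩) _,
          indicator_of_notMem (by simp only [mem_Iio, not_lt]; linarith) _]
        ring
      · rw [if_neg (not_lt.2 h2), if_neg (not_lt.2 (hkk.trans h2)),
          indicator_of_notMem (by simp only [mem_Ico, not_and, not_lt]; intro; linarith) _,
          indicator_of_notMem (by simp only [mem_Iio, not_lt]; linarith) _]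
        ring
  have hA0 : ∀ ξ, 0 ≤ A ξ := by
    intro ξ
    rw [hA]
    apply indicator_nonneg
    intro x hx
    have h5 : (k - x) / Λ ≤ 0 :=
      div_nonpos_of_nonneg_of_nonpos (by linarith [hx.2]) hΛ.le
    have h6 : Real.exp ((k - x) / Λ) ≤ Real.exp 0 := Real.exp_le_exp.2 h5
    rw [Real.exp_zero] at h6
    linarith
  have hB0 : ∀ ξ, 0 ≤ B ξ := by
    intro ξ
    rw [hB]
    apply indicator_nonneg
    intro x _
    have hd : (k - x) / Λ - (k' - x) / Λ = (k - k') / Λ := by ring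
    have h5 : (k - k') / Λ ≤ 0 :=
      div_nonpos_of_nonneg_of_nonpos (by linarith) hΛ.le
    have h6 : (k - x) / Λ ≤ (k' - x) / Λ := by linarith
    have := Real.exp_le_exp.2 h6
    linarith
  have hcont : ∀ c : ℝ, Continuous (fun ξ : ℝ => Real.exp ((c - ξ) / Λ)) := fun c =>
    Real.continuous_exp.comp ((continuous_const.sub continuous_id).div_const Λ)
  have hAint : Integrable A := by
    rw [hA]
    refine IntegrableOn.integrable_indicator ?_ measurableSet_Ico
    exact ((continuous_const.sub (hcont k)).integrableOn_Icc).mono_set Ico_subset_Icc_self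
  have hBint : Integrable B := by
    rw [hB]
    exact IntegrableOn.integrable_indicator
      ((intOn_Iio_aux hΛ k' k').1.sub (intOn_Iio_aux hΛ k k').1) measurableSet_Iio
  have hABint : Integrable (fun ξ : ℝ => M k ξ - M k' ξ) :=
    (hAint.add hBint).congr (ae_of_all _ fun ξ => (hFAB ξ).symm)
  refine ⟨hABint, fun ξ => (hFAB ξ) ▸ add_nonneg (hA0 ξ) (hB0 ξ), ?_⟩
  have hIA : ∫ ξ, A ξ = (k - k') + Λ * (1 - Real.exp ((k - k') / Λ)) := by
    rw [hA, integral_indicator measurableSet_Ico, integral_Ico_eq_integral_Ioo,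
      ← integral_Ioc_eq_integral_Ioo, ← intervalIntegral.integral_of_le hkk,
      intervalIntegral.integral_sub intervalIntegrable_const
        ((hcont k).intervalIntegrable k' k),
      intervalIntegral.integral_const, intervalIntegral_expdiv hΛ]
    have : k - k = 0 := by ring
    rw [this, div_eq_mul_inv, zero_mul, Real.exp_zero]
    simp only [smul_eq_mul]
    ring
  have hIB : ∫ ξ, B ξ = -Λ * (1 - Real.exp ((k - k') / Λ)) := by
    rw [hB, integral_indicator measurableSet_Iio,
      integral_sub (intOn_Iio_aux hΛ k' k').1 (intOn_Iio_aux hΛ k k').1,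
      (intOn_Iio_aux hΛ k' k').2, (intOn_Iio_aux hΛ k k').2]
    have : k' - k' = 0 := by ring
    rw [this, div_eq_mul_inv, zero_mul, Real.exp_zero]
    ring
  calc (∫ ξ : ℝ, (M k ξ - M k' ξ)) = ∫ ξ : ℝ, (A ξ + B ξ) :=
        integral_congr_ae (ae_of_all _ hFAB)
    _ = (∫ ξ, A ξ) + ∫ ξ, B ξ := integral_add hAint hBint
    _ = k - k' := by rw [hIA, hIB]; ring

/-- `∫_ℝ |M_k(ξ) - M_{k'}(ξ)| dξ = |k - k'|` for the modified Maxwellian. -/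
theorem stmt_4 (Λ k k' : ℝ) (hΛ : Λ < 0)
    (M : ℝ → ℝ → ℝ)
    (hM : ∀ c ξ : ℝ, M c ξ =
      ∫ u in Ioi (0:ℝ), (if ξ - Λ * u < c then (1:ℝ) else 0) * Real.exp (-u)) :
    Integrable (fun ξ : ℝ => M k ξ - M k' ξ) ∧
    ∫ ξ : ℝ, |M k ξ - M k' ξ| = |k - k'| := by
  rcases le_total k' k with h | h
  · obtain ⟨hint, hpos, hval⟩ := core Λ k k' hΛ h M hM
    refine ⟨hint, ?_⟩
    rw [integral_congr_ae (ae_of_all _ fun ξ => abs_of_nonneg (hpos ξ)), hval,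
      abs_of_nonneg (by linarith)]
  · obtain ⟨hint, hpos, hval⟩ := core Λ k' k hΛ h M hM
    have hneg : (fun ξ : ℝ => M k ξ - M k' ξ) = fun ξ : ℝ => -(M k' ξ - M k ξ) := by
      funext ξ; ring
    refine ⟨by rw [hneg]; exact hint.neg, ?_⟩
    have habs : ∀ ξ : ℝ, |M k ξ - M k' ξ| = M k' ξ - M k ξ := fun ξ => by
      rw [abs_sub_comm]; exact abs_of_nonneg (hpos ξ)
    rw [integral_congr_ae (ae_of_all _ habs), hval, abs_of_nonpos (by linarith)]
    ring
end

section
/- Let Λ < 0 and let g : ℝ → ℝ be C¹ with g(0) = 0, |g(ξ)|² ≤ C(1+|ξ|²) and ∫_ℝ |ξ g'(ξ)| dξ < ∞. Define c(ξ) = ∫_0^∞ g'(ξ + vΛ) e^{-v} dv and C(k) = ∫_{-∞}^k c(ξ) dξ. Then with M_k the modified Maxwellian, ∫_ℝ g'(ξ) M_k(ξ) dξ = C(k) for all k ∈ ℝ. -/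
/-!
Both sides are iterated integrals of `g'(ξ) e^{-u}` over the region `{u > 0, ξ < k + Λ u}`.
On the left, Fubini puts the `u`-integral outside; on the right, Fubini followed by the
translation `ξ ↦ ξ + uΛ` in the inner integral gives the same expression. Fubini applies because
`g'` is integrable: it is bounded near `0` by continuity, and dominated by `|ξ g'(ξ)|` elsewhere.
-/

open MeasureTheory Real Set

lemma integrable_of_continuous_of_integrable_abs_mul {f : ℝ → ℝ} (hf : Continuous f)
    (h : Integrable fun x => |x * f x|) : Integrable f := by
  have hcompl : IntegrableOn f (Icc (-1) 1)ᶜ := by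
    refine h.integrableOn.mono' hf.aestronglyMeasurable.restrict <|
      (ae_restrict_iff' measurableSet_Icc.compl).2 (ae_of_all _ fun x hx => ?_)
    have hx : 1 ≤ |x| := by
      simp only [mem_compl_iff, mem_Icc, not_and_or, not_le] at hx
      rw [le_abs]
      grind
    calc ‖f x‖ = 1 * |f x| := by rw [one_mul, norm_eq_abs]
      _ ≤ |x| * |f x| := by gcongr
      _ = |x * f x| := (abs_mul x (f x)).symm
  rw [← integrableOn_univ, ← union_compl_self (Icc (-1 : ℝ) 1)]
  exact hf.integrableOn_Icc.union hcompl

lemma setIntegral_Iio_comp_add_right (f : ℝ → ℝ) (k a : ℝ) :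
    ∫ x in Iio k, f (x + a) = ∫ x in Iio (k + a), f x := by
  have := (measurePreserving_add_right volume a).setIntegral_preimage_emb
    (measurableEmbedding_addRight a) f (Iio (k + a))
  rwa [preimage_add_const_Iio, add_sub_cancel_right] at this

section

variable {f : ℝ → ℝ} (hf : Integrable f) (Λ k : ℝ)
include hf

lemma integral_mul_integral_ite_exp :
    ∫ ξ, f ξ * ∫ u in Ioi (0:ℝ), (if ξ - Λ * u < k then (1:ℝ) else 0) * exp (-u)
      = ∫ u in Ioi (0:ℝ), exp (-u) * ∫ ξ in Iio (k + Λ * u), f ξ := by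
  have hint : Integrable
      (Function.uncurry fun ξ u => f ξ * ((if ξ - Λ * u < k then (1:ℝ) else 0) * exp (-u)))
      (volume.prod (volume.restrict (Ioi 0))) := by
    refine (hf.norm.mul_prod (integrableOn_exp_neg_Ioi 0)).mono' ?_ (ae_of_all _ fun p => ?_)
    · exact hf.aestronglyMeasurable.comp_fst.mul (Measurable.aestronglyMeasurable <|
        (Measurable.ite (measurableSet_lt (by fun_prop) measurable_const) measurable_const
          measurable_const).mul (by fun_prop))
    · obtain ⟨ξ, u⟩ := p
      simp only [Function.uncurry_apply_pair, norm_mul, norm_eq_abs, abs_exp]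
      split_ifs <;> simp [mul_nonneg, exp_nonneg]
  simp_rw [← integral_const_mul]
  rw [integral_integral_swap hint]
  refine setIntegral_congr_fun measurableSet_Ioi fun u _ => ?_
  have hind : ∀ ξ, f ξ * ((if ξ - Λ * u < k then (1:ℝ) else 0) * exp (-u))
      = exp (-u) * (Iio (k + Λ * u)).indicator f ξ := fun ξ => by
    simp only [indicator, mem_Iio, sub_lt_iff_lt_add]
    split_ifs <;> ring
  simp_rw [hind, integral_const_mul, integral_indicator measurableSet_Iio]

lemma setIntegral_Iio_integral_comp_add_mul_exp :
    ∫ ξ in Iio k, ∫ v in Ioi (0:ℝ), f (ξ + v * Λ) * exp (-v)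
      = ∫ u in Ioi (0:ℝ), exp (-u) * ∫ ξ in Iio (k + Λ * u), f ξ := by
  have hshear : MeasurePreserving (fun p : ℝ × ℝ => (p.1, p.2 + p.1 * Λ))
      ((volume.restrict (Ioi 0)).prod volume) ((volume.restrict (Ioi 0)).prod volume) :=
    (MeasurePreserving.id _).skew_product (by fun_prop)
      (ae_of_all _ fun v => (measurePreserving_add_right volume (v * Λ)).map_eq)
  have hint : Integrable (fun p : ℝ × ℝ => exp (-p.1) * f (p.2 + p.1 * Λ))
      ((volume.restrict (Ioi 0)).prod volume) :=
    (hshear.integrable_comp ((integrableOn_exp_neg_Ioi 0).mul_prod hf).1).2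
      ((integrableOn_exp_neg_Ioi 0).mul_prod hf)
  have hint' : Integrable (Function.uncurry fun v ξ => exp (-v) * f (ξ + v * Λ))
      ((volume.restrict (Ioi 0)).prod (volume.restrict (Iio k))) := by
    have := hint.restrict (s := univ ×ˢ Iio k)
    rwa [← Measure.prod_restrict, Measure.restrict_univ] at this
  simp_rw [mul_comm (f _)]
  rw [← integral_integral_swap hint']
  refine setIntegral_congr_fun measurableSet_Ioi fun v _ => ?_
  rw [integral_const_mul, setIntegral_Iio_comp_add_right, mul_comm v]

end

theorem stmt_10_general (Λ : ℝ) (g : ℝ → ℝ)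
    (hg_diff : ContDiff ℝ 1 g)
    (hg_mom : Integrable (fun ξ : ℝ => |ξ * deriv g ξ|))
    (M : ℝ → ℝ → ℝ)
    (hM : ∀ k ξ : ℝ, M k ξ =
      ∫ u in Ioi (0:ℝ), (if ξ - Λ * u < k then (1:ℝ) else 0) * Real.exp (-u))
    (c : ℝ → ℝ)
    (hc : ∀ ξ : ℝ, c ξ = ∫ v in Ioi (0:ℝ), deriv g (ξ + v * Λ) * Real.exp (-v))
    (C : ℝ → ℝ)
    (hC : ∀ k : ℝ, C k = ∫ ξ in Iio k, c ξ) :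
    ∀ k : ℝ, ∫ ξ : ℝ, deriv g ξ * M k ξ = C k := by
  intro k
  have hf : Integrable (deriv g) :=
    integrable_of_continuous_of_integrable_abs_mul (hg_diff.continuous_deriv le_rfl) hg_mom
  simp_rw [hM, hC, hc]
  rw [integral_mul_integral_ite_exp hf, setIntegral_Iio_integral_comp_add_mul_exp hf]

/-- The stochastic forcing coefficient: `∫_ℝ g'(ξ) M_k(ξ) dξ = C(k)` where
`C(k) = ∫_{-∞}^k ∫_0^∞ g'(ξ + vΛ) e^{-v} dv dξ`. -/
theorem stmt_10 (Λ : ℝ) (hΛ : Λ < 0) (g : ℝ → ℝ) (Cg : ℝ)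
    (hg_diff : ContDiff ℝ 1 g)
    (hg0 : g 0 = 0)
    (hg_growth : ∀ ξ : ℝ, |g ξ| ^ 2 ≤ Cg * (1 + |ξ| ^ 2))
    (hg_mom : Integrable (fun ξ : ℝ => |ξ * deriv g ξ|))
    (M : ℝ → ℝ → ℝ)
    (hM : ∀ k ξ : ℝ, M k ξ =
      ∫ u in Ioi (0:ℝ), (if ξ - Λ * u < k then (1:ℝ) else 0) * Real.exp (-u))
    (c : ℝ → ℝ)
    (hc : ∀ ξ : ℝ, c ξ = ∫ v in Ioi (0:ℝ), deriv g (ξ + v * Λ) * Real.exp (-v))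
    (C : ℝ → ℝ)
    (hC : ∀ k : ℝ, C k = ∫ ξ in Iio k, c ξ) :
    ∀ k : ℝ, ∫ ξ : ℝ, deriv g ξ * M k ξ = C k :=
  stmt_10_general Λ g hg_diff hg_mom M hM c hc C hC
end
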